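/- Let κ₀ > 0, let J : ℤ → ℝ satisfy the recursion J (m-1) + J (m+1) = (2*m/κ₀) * J m for all m, and suppose J m * J (m+1) ≤ 0 for some integer m. Define B n = (J n)^2 + (J (n+1))^2 - (2*n/κ₀) * (J n) * (J (n+1)). Then B m ≤ B (m+1). -/
import Mathlib


theorem bessel_B_mono_of_sign_change (κ₀ : ℝ) (hκ : 0 < κ₀) (J : ℤ → ℝ)
    (hrec : ∀ m : ℤ, J (m - 1) + J (m + 1) = (2 * (m : ℝ) / κ₀) * J m)
    (m : ℤ) (hsign : J m * J (m + 1) ≤ 0)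
    (B : ℤ → ℝ)
    (hB : ∀ n : ℤ, B n = (J n) ^ 2 + (J (n + 1)) ^ 2 - (2 * (n : ℝ) / κ₀) * J n * J (n + 1)) :
    B m ≤ B (m + 1) := by
  have h1 := hrec (m + 1)
  simp only [add_sub_cancel_right] at h1
  rw [hB m, hB (m + 1)]
  push_cast at h1 ⊢
  have hκ' : κ₀ ≠ 0 := ne_of_gt hκ
  have key : (J m ^ 2 + J (m + 1) ^ 2 - 2 * (m : ℝ) / κ₀ * J m * J (m + 1)) -
      (J (m + 1) ^ 2 + J (m + 1 + 1) ^ 2 -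
        2 * ((m : ℝ) + 1) / κ₀ * J (m + 1) * J (m + 1 + 1)) =
      2 / κ₀ * (J m * J (m + 1)) := by
    linear_combination (J m - J (m + 1 + 1)) * h1
  have h2 : 2 / κ₀ * (J m * J (m + 1)) ≤ 0 :=
    mul_nonpos_of_nonneg_of_nonpos (by positivity) hsign
  linarith [key]
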